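/- Let σ > 0, ε ≥ 0, p ∈ [1,∞] with conjugate exponent q, μ, w ∈ ℝ^d with w ≠ 0, and b' ∈ ℝ. If w·μ ≥ ε‖w‖_q, then 1 − (1/2)[Φ((w·μ + b')/(‖w‖₂σ) − (‖w‖_q/‖w‖₂)(ε/σ)) + Φ((w·μ − b')/(‖w‖₂σ) − (‖w‖_q/‖w‖₂)(ε/σ))] ≥ 1 − Φ(‖μ‖₂/σ − (‖w‖_q/‖w‖₂)(ε/σ)). -/
import Mathlib


open MeasureTheory ProbabilityTheory
open scoped ENNReal NNReal

/-- Euclidean inner product on `ℝ^d`. -/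
noncomputable def dotp {d : ℕ} (w x : Fin d → ℝ) : ℝ := ∑ i, w i * x i

/-- The `ℓ₂` norm on `ℝ^d`. -/
noncomputable def l2 {d : ℕ} (w : Fin d → ℝ) : ℝ := Real.sqrt (∑ i, (w i)^2)

/-- The product Gaussian measure `N(m, σ²I_d)` on `ℝ^d`. -/
noncomputable def gaussPi {d : ℕ} (m : Fin d → ℝ) (σ : ℝ) : Measure (Fin d → ℝ) :=
  Measure.pi fun i => gaussianReal (m i) ((σ^2).toNNReal)

/-- The standard normal cumulative distribution function `Φ`. -/
noncomputable def Phi (x : ℝ) : ℝ := ((gaussianReal 0 1) (Set.Iic x)).toReal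

/-- The `ℓp` norm on `ℝ^d` for `p ∈ [1,∞]` (as an extended real exponent). -/
noncomputable def lpnorm {d : ℕ} (p : ℝ≥0∞) (v : Fin d → ℝ) : ℝ :=
  if p = ∞ then ⨆ i, |v i| else (∑ i, |v i| ^ p.toReal) ^ (1 / p.toReal)

/-- The `ℓp` norm on `ℝ^d` for a real exponent `p ∈ [1,∞)`. -/
noncomputable def lpR {d : ℕ} (p : ℝ) (v : Fin d → ℝ) : ℝ := (∑ i, |v i| ^ p) ^ (1/p)

lemma Phi_eq (x : ℝ) : Phi x = ∫ t in Set.Iic x, gaussianPDFReal 0 1 t := by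
  rw [Phi, gaussianReal_apply_eq_integral _ one_ne_zero,
    ENNReal.toReal_ofReal (integral_nonneg (gaussianPDFReal_nonneg _ _))]

lemma Phi_mono : Monotone Phi := fun a b hab =>
  ENNReal.toReal_mono (measure_ne_top _ _) (measure_mono (Set.Iic_subset_Iic.2 hab))

lemma Phi_sub (a b : ℝ) : Phi b - Phi a = ∫ t in a..b, gaussianPDFReal 0 1 t := by
  rw [Phi_eq, Phi_eq]
  exact intervalIntegral.integral_Iic_sub_Iic ((integrable_gaussianPDFReal 0 1).integrableOn)
    ((integrable_gaussianPDFReal 0 1).integrableOn)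

lemma pdf_le {m u : ℝ} (hm : 0 ≤ m) (hu : 0 ≤ u) :
    gaussianPDFReal 0 1 (m + u) ≤ gaussianPDFReal 0 1 (m - u) := by
  unfold gaussianPDFReal
  refine mul_le_mul_of_nonneg_left (Real.exp_le_exp.2 ?_) (by positivity)
  push_cast
  nlinarith

lemma key {m : ℝ} (hm : 0 ≤ m) (h : ℝ) : Phi (m + h) + Phi (m - h) ≤ 2 * Phi m := by
  have main : ∀ h : ℝ, 0 ≤ h → Phi (m + h) + Phi (m - h) ≤ 2 * Phi m := by
    intro h hh
    have h1 : Phi (m + h) - Phi m = ∫ u in (0:ℝ)..h, gaussianPDFReal 0 1 (m + u) := by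
      rw [intervalIntegral.integral_comp_add_left (gaussianPDFReal 0 1) m, add_zero, Phi_sub]
    have h2 : Phi m - Phi (m - h) = ∫ u in (0:ℝ)..h, gaussianPDFReal 0 1 (m - u) := by
      rw [intervalIntegral.integral_comp_sub_left (gaussianPDFReal 0 1) m, sub_zero, Phi_sub]
    have h3 : (∫ u in (0:ℝ)..h, gaussianPDFReal 0 1 (m + u)) ≤
        ∫ u in (0:ℝ)..h, gaussianPDFReal 0 1 (m - u) := by
      apply intervalIntegral.integral_mono_on hh
      · exact ((integrable_gaussianPDFReal 0 1).comp_add_left m).intervalIntegrable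
      · exact (((integrable_gaussianPDFReal 0 1).comp_sub_left m)).intervalIntegrable
      · intro x hx
        exact pdf_le hm hx.1
    linarith
  rcases le_total 0 h with hh | hh
  · exact main h hh
  · have := main (-h) (by linarith)
    rw [← sub_eq_add_neg, sub_neg_eq_add] at this
    linarith

lemma lpnorm_nonneg {d : ℕ} (p : ℝ≥0∞) (v : Fin d → ℝ) : 0 ≤ lpnorm p v := by
  unfold lpnorm
  split
  · exact Real.iSup_nonneg fun i => abs_nonneg _
  · exact Real.rpow_nonneg (Finset.sum_nonneg fun i _ =>
      Real.rpow_nonneg (abs_nonneg _) _) _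

lemma l2_pos {d : ℕ} {w : Fin d → ℝ} (hw : w ≠ 0) : 0 < l2 w := by
  apply Real.sqrt_pos.2
  obtain ⟨i, hi⟩ : ∃ i, w i ≠ 0 := by
    by_contra hc
    push_neg at hc
    exact hw (funext hc)
  exact Finset.sum_pos' (fun j _ => sq_nonneg _) ⟨i, Finset.mem_univ i, by positivity⟩

lemma cauchy_schwarz {d : ℕ} (w μ : Fin d → ℝ) : dotp w μ ≤ l2 w * l2 μ := by
  unfold dotp l2
  calc ∑ i, w i * μ i ≤ |∑ i, w i * μ i| := le_abs_self _
    _ = Real.sqrt ((∑ i, w i * μ i) ^ 2) := (Real.sqrt_sq_eq_abs _).symm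
    _ ≤ Real.sqrt ((∑ i, (w i)^2) * ∑ i, (μ i)^2) :=
        Real.sqrt_le_sqrt (Finset.sum_mul_sq_le_sq_mul_sq _ _ _)
    _ = _ := Real.sqrt_mul (Finset.sum_nonneg fun i _ => sq_nonneg _) _

/-- lower bound on the `ℓp`-adversarial-error rate when
`w·μ ≥ ε‖w‖_q`. -/
theorem lp_adversarial_error_lower_bound {d : ℕ} (σ ε : ℝ) (hσ : 0 < σ) (hε : 0 ≤ ε)
    (p q : ℝ≥0∞) (hp : 1 ≤ p) (hpq : 1/p + 1/q = 1)
    (μ w : Fin d → ℝ) (hw : w ≠ 0) (b' : ℝ)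
    (h : ε * lpnorm q w ≤ dotp w μ) :
    1 - (1/2) * (Phi ((dotp w μ + b') / (l2 w * σ) - (lpnorm q w / l2 w) * (ε / σ)) +
                  Phi ((dotp w μ - b') / (l2 w * σ) - (lpnorm q w / l2 w) * (ε / σ))) ≥
      1 - Phi (l2 μ / σ - (lpnorm q w / l2 w) * (ε / σ)) := by

  have hL : 0 < l2 w := l2_pos hw
  set c : ℝ := (lpnorm q w / l2 w) * (ε / σ) with hc
  set m : ℝ := dotp w μ / (l2 w * σ) - c with hmdef
  set δ : ℝ := b' / (l2 w * σ) with hδ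
  have e1 : (dotp w μ + b') / (l2 w * σ) - c = m + δ := by
    rw [hmdef, hδ, add_div]; ring
  have e2 : (dotp w μ - b') / (l2 w * σ) - c = m - δ := by
    rw [hmdef, hδ, sub_div]; ring
  have hm : 0 ≤ m := by
    rw [hmdef, hc, sub_nonneg, div_mul_div_comm]
    gcongr
    linarith [mul_comm ε (lpnorm q w)]
  have hmM : m ≤ l2 μ / σ - c := by
    rw [hmdef]
    have hcs := cauchy_schwarz w μ
    have h2 : dotp w μ / (l2 w * σ) ≤ l2 μ / σ := by
      rw [div_le_div_iff₀ (by positivity) hσ]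
      nlinarith [mul_le_mul_of_nonneg_right hcs hσ.le]
    linarith
  rw [e1, e2]
  have hk := key hm δ
  have hmono : Phi m ≤ Phi (l2 μ / σ - c) := Phi_mono hmM
  linarith
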